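/- Let A, B ⊆ [0,1]^d be nonempty sets and ε ∈ [0,1]. If A ⊆ B^{+ε}, then max(HV(A) − HV(B), 0) ≤ d · ε · (R + ε)^{d−1}. -/

import Mathlib

/-!
Push the points of `B` up by `ε` one coordinate at a time. Pushing by `δ` in coordinate `i`
enlarges the dominated region only by the slab `z i ≤ y i ≤ z i + δ`: a dominated point with
`y i ≥ z i + δ` is the translate of a point that was dominated before the push. The slab has
width `δ` in coordinate `i` and sides at most `R + ε` in the other ones. After all `d` pushes the
region contains `D(A)`, because every point of `A ⊆ B^{+ε}` lies below a point of `B + ε·𝟙`.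
-/

open MeasureTheory

/-- The dominated region of `S` with respect to the reference point `z`. -/
def dominatedRegion {d : ℕ} (z : Fin d → ℝ) (S : Set (Fin d → ℝ)) : Set (Fin d → ℝ) :=
  {y | ∃ u ∈ S, z ≤ y ∧ y ≤ u}

/-- The dominated hypervolume: Lebesgue measure of the dominated region. -/
noncomputable def HV {d : ℕ} (z : Fin d → ℝ) (S : Set (Fin d → ℝ)) : ℝ :=
  (volume (dominatedRegion z S)).toReal

/-- The ℓ∞-expansion `S^{+ε}` (the norm on `Fin d → ℝ` is the sup norm). -/
def expandLinf {d : ℕ} (S : Set (Fin d → ℝ)) (ε : ℝ) : Set (Fin d → ℝ) :=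
  {x | ∃ s ∈ S, ‖x - s‖ ≤ ε}

open ENNReal Pointwise Set Function

theorem volume_Icc_update_le {ι : Type*} [Fintype ι] [DecidableEq ι] {a b : ι → ℝ} {i : ι}
    {δ L : ℝ} (hL : ∀ j ≠ i, b j - a j ≤ L) :
    volume (Icc a (update b i (a i + δ))) ≤
      ENNReal.ofReal δ * ENNReal.ofReal L ^ (Fintype.card ι - 1) := by
  rw [Real.volume_Icc_pi, ← Finset.mul_prod_erase _ _ (Finset.mem_univ i), update_self,
    add_sub_cancel_left, ← Finset.card_univ, ← Finset.card_erase_of_mem (Finset.mem_univ i),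
    ← Finset.prod_const]
  refine mul_le_mul_right (Finset.prod_le_prod' fun j hj => ?_) _
  rw [update_of_ne (Finset.ne_of_mem_erase hj)]
  exact ENNReal.ofReal_le_ofReal (hL j (Finset.ne_of_mem_erase hj))

section dominatedRegion

variable {d : ℕ} {z : Fin d → ℝ} {S T : Set (Fin d → ℝ)}

theorem dominatedRegion_subset_of_forall_exists_le (h : ∀ s ∈ S, ∃ t ∈ T, s ≤ t) :
    dominatedRegion z S ⊆ dominatedRegion z T := by
  rintro y ⟨s, hs, hzy, hys⟩
  obtain ⟨t, ht, hst⟩ := h s hs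
  exact ⟨t, ht, hzy, hys.trans hst⟩

theorem dominatedRegion_subset_Icc {M : Fin d → ℝ} (hS : ∀ s ∈ S, s ≤ M) :
    dominatedRegion z S ⊆ Icc z M := by
  rintro y ⟨s, hs, hzy, hys⟩
  exact ⟨hzy, hys.trans (hS s hs)⟩

theorem volume_dominatedRegion_ne_top {M : Fin d → ℝ} (hS : ∀ s ∈ S, s ≤ M) :
    volume (dominatedRegion z S) ≠ ∞ :=
  ((measure_mono (dominatedRegion_subset_Icc hS)).trans_lt isCompact_Icc.measure_lt_top).ne

theorem dominatedRegion_subset_const_vadd_of_subset_expandLinf {A : Set (Fin d → ℝ)} {ε : ℝ}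
    (hA : A ⊆ expandLinf S ε) :
    dominatedRegion z A ⊆ dominatedRegion z ((fun _ : Fin d => ε) +ᵥ S) := by
  refine dominatedRegion_subset_of_forall_exists_le fun a ha => ?_
  obtain ⟨s, hs, has⟩ := hA ha
  refine ⟨(fun _ => ε) + s, vadd_mem_vadd_set hs, fun j => ?_⟩
  have := (abs_le.mp ((norm_le_pi_norm (a - s) j).trans has)).2
  simp only [Pi.sub_apply, Pi.add_apply] at this ⊢
  linarith

theorem dominatedRegion_single_vadd_subset {M : Fin d → ℝ} (hS : ∀ s ∈ S, s ≤ M) (i : Fin d)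
    (δ : ℝ) :
    dominatedRegion z ((Pi.single i δ : Fin d → ℝ) +ᵥ S) ⊆
      ((Pi.single i δ : Fin d → ℝ) +ᵥ dominatedRegion z S) ∪ Icc z (update M i (z i + δ)) := by
  rintro y ⟨_, ⟨s, hs, rfl⟩, hzy, hys⟩
  simp only [vadd_eq_add] at hys
  by_cases hyi : z i + δ ≤ y i
  · refine Or.inl ⟨y - Pi.single i δ, ⟨s, hs, fun j => ?_, ?_⟩, add_sub_cancel _ _⟩
    · rcases eq_or_ne j i with rfl | hj
      · simp only [Pi.sub_apply, Pi.single_eq_same]; linarith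
      · simpa [Pi.single_eq_of_ne hj] using hzy j
    · exact sub_le_iff_le_add'.mpr hys
  · refine Or.inr ⟨hzy, fun j => ?_⟩
    rcases eq_or_ne j i with rfl | hj
    · rw [update_self]; linarith
    · have := hys j
      simp only [Pi.add_apply, Pi.single_eq_of_ne hj, zero_add] at this
      simpa [update_of_ne hj] using this.trans (hS s hs j)

theorem volume_dominatedRegion_single_vadd_le {M : Fin d → ℝ} (hS : ∀ s ∈ S, s ≤ M)
    (i : Fin d) (δ : ℝ) {L : ℝ} (hL : ∀ j ≠ i, M j - z j ≤ L) :
    volume (dominatedRegion z ((Pi.single i δ : Fin d → ℝ) +ᵥ S)) ≤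
      volume (dominatedRegion z S) + ENNReal.ofReal δ * ENNReal.ofReal L ^ (d - 1) :=
  calc _ ≤ volume (((Pi.single i δ : Fin d → ℝ) +ᵥ dominatedRegion z S) ∪
          Icc z (update M i (z i + δ))) :=
        measure_mono (dominatedRegion_single_vadd_subset hS i δ)
    _ ≤ volume ((Pi.single i δ : Fin d → ℝ) +ᵥ dominatedRegion z S) +
          volume (Icc z (update M i (z i + δ))) :=
        measure_union_le _ _
    _ ≤ _ := by
        rw [measure_vadd]
        gcongr
        simpa using volume_Icc_update_le hL

theorem volume_dominatedRegion_sum_single_vadd_le {M : Fin d → ℝ} (hS : ∀ s ∈ S, s ≤ M)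
    {ε L : ℝ} (hε : 0 ≤ ε) (hL : ∀ j, M j + ε - z j ≤ L) (I : Finset (Fin d)) :
    volume (dominatedRegion z ((∑ j ∈ I, (Pi.single j ε : Fin d → ℝ)) +ᵥ S)) ≤
      volume (dominatedRegion z S) + I.card * (ENNReal.ofReal ε * ENNReal.ofReal L ^ (d - 1)) := by
  induction I using Finset.induction_on with
  | empty => simp
  | insert i I hi ih =>
    have hbound : ∀ t ∈ (∑ j ∈ I, (Pi.single j ε : Fin d → ℝ)) +ᵥ S,
        t ≤ M + fun _ => ε := by
      rintro _ ⟨s, hs, rfl⟩ j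
      have : ∑ k ∈ I, Pi.single k ε j ≤ ε := by
        refine (Finset.sum_pi_single j (fun _ => ε) I).trans_le ?_
        split_ifs <;> linarith
      simpa [add_comm] using add_le_add (hS s hs j) this
    calc _ = volume (dominatedRegion z
            ((Pi.single i ε : Fin d → ℝ) +ᵥ (∑ j ∈ I, (Pi.single j ε : Fin d → ℝ)) +ᵥ S)) := by
          rw [Finset.sum_insert hi, add_vadd]
      _ ≤ volume (dominatedRegion z ((∑ j ∈ I, (Pi.single j ε : Fin d → ℝ)) +ᵥ S)) +
            ENNReal.ofReal ε * ENNReal.ofReal L ^ (d - 1) :=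
          volume_dominatedRegion_single_vadd_le hbound i ε fun j _ => hL j
      _ ≤ _ := by
          rw [Finset.card_insert_of_notMem hi, Nat.cast_succ, add_one_mul, ← add_assoc]
          gcongr

theorem volume_dominatedRegion_const_vadd_le {M : Fin d → ℝ} (hS : ∀ s ∈ S, s ≤ M)
    {ε L : ℝ} (hε : 0 ≤ ε) (hL : ∀ j, M j + ε - z j ≤ L) :
    volume (dominatedRegion z ((fun _ : Fin d => ε) +ᵥ S)) ≤
      volume (dominatedRegion z S) + d * (ENNReal.ofReal ε * ENNReal.ofReal L ^ (d - 1)) := by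
  simpa [Finset.univ_sum_single] using
    volume_dominatedRegion_sum_single_vadd_le hS hε hL Finset.univ

end dominatedRegion

theorem hv_one_sided_stability_general {d : ℕ} (z : Fin d → ℝ) (hz : ∀ j, z j < 0)
    (A B : Set (Fin d → ℝ))
    (hBsub : B ⊆ Set.Icc 0 1)
    (ε : ℝ) (hε0 : 0 ≤ ε)
    (hAB : A ⊆ expandLinf B ε) :
    max (HV z A - HV z B) 0 ≤ (d : ℝ) * ε * ((⨆ j, (1 - z j)) + ε) ^ (d - 1) := by
  set R := ⨆ j, (1 - z j)
  have hR : 0 ≤ R := Real.iSup_nonneg fun j => by linarith [hz j]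
  have hB : ∀ b ∈ B, b ≤ 1 := fun b hb => (hBsub hb).2
  have hL (j : Fin d) : (1 : Fin d → ℝ) j + ε - z j ≤ R + ε := by
    have := le_ciSup (Finite.bddAbove_range fun j => 1 - z j) j
    simp only [Pi.one_apply]
    linarith
  have hvol : volume (dominatedRegion z A) ≤
      volume (dominatedRegion z B) + ENNReal.ofReal (d * ε * (R + ε) ^ (d - 1)) :=
    calc _ ≤ volume (dominatedRegion z ((fun _ : Fin d => ε) +ᵥ B)) :=
          measure_mono (dominatedRegion_subset_const_vadd_of_subset_expandLinf hAB)
      _ ≤ _ := volume_dominatedRegion_const_vadd_le hB hε0 hL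
      _ = _ := by
          rw [ENNReal.ofReal_mul (by positivity), ENNReal.ofReal_mul (by positivity),
            ENNReal.ofReal_pow (by positivity), ENNReal.ofReal_natCast, mul_assoc]
  have hHV :=
    ENNReal.toReal_le_add hvol (volume_dominatedRegion_ne_top hB) ENNReal.ofReal_ne_top
  rw [ENNReal.toReal_ofReal (by positivity)] at hHV
  exact max_le (by unfold HV; linarith) (by positivity)

/-- One-sided HV comparison: if `A ⊆ B^{+ε}`, then the positive part of the
hypervolume deficit is at most `d·ε·(R+ε)^(d-1)` with `R = max_j (1 - z_j)`. -/
theorem hv_one_sided_stability {d : ℕ} (hd : 1 ≤ d) (z : Fin d → ℝ) (hz : ∀ j, z j < 0)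
    (A B : Set (Fin d → ℝ)) (hA : A.Nonempty) (hB : B.Nonempty)
    (hAsub : A ⊆ Set.Icc 0 1) (hBsub : B ⊆ Set.Icc 0 1)
    (ε : ℝ) (hε0 : 0 ≤ ε) (hε1 : ε ≤ 1)
    (hAB : A ⊆ expandLinf B ε) :
    max (HV z A - HV z B) 0 ≤ (d : ℝ) * ε * ((⨆ j, (1 - z j)) + ε) ^ (d - 1) :=
  hv_one_sided_stability_general z hz A B hBsub ε hε0 hAB
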